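/- With X, T, (τ_n)_n, L(τ̄), X_τ̄ as in the context: fix a ∈ X and let x ∈ X^ℤ be any bi-infinite sequence with x_{-1} = T^{s_1}(a) and x_0 = T^{s_2}(a). Then for any accumulation point z in X^ℤ of the sequence (τ_0∘τ_1∘⋯∘τ_n(x))_n, the subshift X_τ̄ equals the closure of the shift-orbit {σ^n(z) : n ∈ ℤ} of z. -/

import Mathlib

open TopologicalSpace

/-- The group of self-homeomorphisms of a space, with `(f * g) x = f (g x)`. -/
instance homeoGroup {X : Type*} [TopologicalSpace X] : Group (X ≃ₜ X) where
  mul f g := g.trans f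
  one := Homeomorph.refl X
  inv := Homeomorph.symm
  mul_assoc _ _ _ := Homeomorph.ext fun _ => rfl
  one_mul _ := Homeomorph.ext fun _ => rfl
  mul_one _ := Homeomorph.ext fun _ => rfl
  inv_mul_cancel f := Homeomorph.ext fun x => f.symm_apply_apply x

variable {X : Type*} [TopologicalSpace X] {Γ : Type*} [Group Γ]

/-- The word `τ_n(x) = T^{s_1}(x) ⋯ T^{s_{d_n}}(x)` of the generalized substitution `τ_n`,
where `S_n = {s 0, …, s (d n - 1)}` (0-indexed) and `s 0 = 1`. -/
def tauWord (T : Γ →* (X ≃ₜ X)) (s : ℕ → Γ) (d : ℕ → ℕ) (n : ℕ) (x : X) : List X :=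
  List.ofFn fun i : Fin (d n) => T (s i.val) x

/-- The word `τ_i ∘ τ_{i+1} ∘ ⋯ ∘ τ_{i+k}(a)`, where each substitution is extended to words
by concatenation. -/
def tauComp (T : Γ →* (X ≃ₜ X)) (s : ℕ → Γ) (d : ℕ → ℕ) : ℕ → ℕ → X → List X
  | i, 0, a => tauWord T s d i a
  | i, k + 1, a => (tauComp T s d (i + 1) k a).flatMap (tauWord T s d i)

/-- The set of words of length `ℓ` (as functions `Fin ℓ → X`) occurring as subwords of some
`τ_0 ∘ ⋯ ∘ τ_j (a)`. -/
def subwordSet (T : Γ →* (X ≃ₜ X)) (s : ℕ → Γ) (d : ℕ → ℕ) (a : X) (ℓ : ℕ) :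
    Set (Fin ℓ → X) :=
  {v | ∃ j off : ℕ, ∀ m : Fin ℓ, (tauComp T s d 0 j a)[off + m.val]? = some (v m)}

/-- The language `L(τ̄,a)` in each length `ℓ`: subwords of the `τ_0 ∘ ⋯ ∘ τ_j(a)` together
with all their limits, i.e. the closure of `subwordSet` in `X^ℓ`. -/
def lang (T : Γ →* (X ≃ₜ X)) (s : ℕ → Γ) (d : ℕ → ℕ) (a : X) (ℓ : ℕ) : Set (Fin ℓ → X) :=
  closure (subwordSet T s d a ℓ)

/-- The extension of the substitution `τ_n` to bi-infinite sequences: the image of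
`x = (x_i)_i` is `⋯ τ_n(x_{-1}) . τ_n(x_0) τ_n(x_1) ⋯` with `τ_n(x_0)` starting at index 0;
since all `τ_n`-words have length `d n`, the letter at index `m` is
`T^{s_{(m mod d n)+1}} (x_{m div d n})`. -/
def tauSeq (T : Γ →* (X ≃ₜ X)) (s : ℕ → Γ) (d : ℕ → ℕ) (n : ℕ) (x : ℤ → X) : ℤ → X :=
  fun m => T (s (m % (d n : ℤ)).toNat) (x (m / (d n : ℤ)))

/-- The sequence `τ_0 ∘ τ_1 ∘ ⋯ ∘ τ_n (x)` for a bi-infinite sequence `x`. -/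
def tauSeqComp (T : Γ →* (X ≃ₜ X)) (s : ℕ → Γ) (d : ℕ → ℕ) : ℕ → (ℤ → X) → (ℤ → X)
  | 0, x => tauSeq T s d 0 x
  | n + 1, x => tauSeqComp T s d n (tauSeq T s d (n + 1) x)

/-- The generalized subshift `X_τ̄`: all bi-infinite sequences `y` such that every window
`y[-n,n]` belongs to the language `L(τ̄) = ⋃_a L(τ̄,a)`. -/
def Xtau (T : Γ →* (X ≃ₜ X)) (s : ℕ → Γ) (d : ℕ → ℕ) : Set (ℤ → X) :=
  {y | ∀ n : ℕ, (fun m : Fin (2 * n + 1) => y ((m.val : ℤ) - (n : ℤ))) ∈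
    ⋃ a : X, lang T s d a (2 * n + 1)}

section Lemmas

variable {X : Type*} [TopologicalSpace X] {Γ : Type*} [Group Γ]
variable (T : Γ →* (X ≃ₜ X)) (s : ℕ → Γ) (d : ℕ → ℕ)

lemma T_mul_apply (g h : Γ) (b : X) : T (g * h) b = T g (T h b) := by
  rw [map_mul]; rfl

/-- length of `tauComp i k`. -/
def tlen (d : ℕ → ℕ) (i k : ℕ) : ℕ := ∏ t ∈ Finset.range (k+1), d (i+t)

lemma tlen_succ (i k : ℕ) : tlen d i (k+1) = d i * tlen d (i+1) k := by
  unfold tlen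
  rw [Finset.prod_range_succ', mul_comm]
  congr 1
  exact Finset.prod_congr rfl (by intro t _; ring_nf)

lemma tauWord_length (n : ℕ) (b : X) : (tauWord T s d n b).length = d n := by
  simp [tauWord]

lemma tauComp_length (i k : ℕ) (b : X) : (tauComp T s d i k b).length = tlen d i k := by
  induction k generalizing i b with
  | zero => simp [tauComp, tauWord, tlen]
  | succ k ih =>
    show ((tauComp T s d (i+1) k b).flatMap (tauWord T s d i)).length = _
    rw [List.length_flatMap, tlen_succ]
    have : ∀ c ∈ tauComp T s d (i+1) k b, (List.length ∘ tauWord T s d i) c = d i := by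
      intro c _; simp [tauWord]
    rw [show (fun a => (tauWord T s d i a).length) = List.length ∘ tauWord T s d i from rfl]
    rw [List.map_congr_left this, List.map_const', List.sum_replicate, smul_eq_mul,
      ih, mul_comm]

end Lemmas
section Lemmas2

variable {X : Type*} [TopologicalSpace X] {Γ : Type*} [Group Γ]
variable (T : Γ →* (X ≃ₜ X)) (s : ℕ → Γ) (d : ℕ → ℕ)

lemma flatMap_getElem? {α β : Type*} (L : List α) (f : α → List β) (K : ℕ) (hK : 0 < K)
    (hf : ∀ c, (f c).length = K) (p : ℕ) :
    (L.flatMap f)[p]? = L[p / K]?.bind fun c => (f c)[p % K]? := by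
  induction L generalizing p with
  | nil => simp
  | cons c L ih =>
    rw [List.flatMap_cons, List.getElem?_append]
    by_cases h : p < (f c).length
    · rw [if_pos h]
      have h' : p < K := (hf c) ▸ h
      rw [Nat.div_eq_of_lt h', Nat.mod_eq_of_lt h']
      simp
    · rw [if_neg h]
      rw [hf c] at h ⊢
      push_neg at h
      obtain ⟨t, rfl⟩ : ∃ t, p = t + K := ⟨p - K, by omega⟩
      rw [Nat.add_sub_cancel, ih, Nat.add_div_right _ hK, Nat.add_mod_right]
      simp

lemma tauWord_getElem? (n : ℕ) (b : X) (q : ℕ) (hq : q < d n) :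
    (tauWord T s d n b)[q]? = some (T (s q) b) := by
  rw [tauWord, List.getElem?_ofFn, dif_pos hq]

/-- `τ_i ∘ ⋯ ∘ τ_{i+k+1} = (τ_i ∘ ⋯ ∘ τ_{i+k}) ∘ τ_{i+k+1}` on letters. -/
lemma tauComp_last (i k : ℕ) (b : X) :
    tauComp T s d i (k+1) b = (tauWord T s d (i+k+1) b).flatMap (tauComp T s d i k) := by
  induction k generalizing i b with
  | zero =>
    show (tauComp T s d (i+1) 0 b).flatMap _ = _
    rfl
  | succ k ih =>
    show (tauComp T s d (i+1) (k+1) b).flatMap (tauWord T s d i) = _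
    rw [ih (i+1) b, List.flatMap_assoc]
    have h1 : i + 1 + k + 1 = i + (k+1) + 1 := by omega
    rw [h1]
    exact List.flatMap_congr fun c _ => rfl

/-- `τ_0 ∘ ⋯ ∘ τ_{j+k+1} = (τ_{j+1} ∘ ⋯ ∘ τ_{j+k+1})` then `(τ_0 ∘ ⋯ ∘ τ_j)` letterwise. -/
lemma tauComp_split (j k : ℕ) (b : X) :
    tauComp T s d 0 (j+k+1) b = (tauComp T s d (j+1) k b).flatMap (tauComp T s d 0 j) := by
  induction k generalizing b with
  | zero =>
    have := tauComp_last T s d 0 j b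
    simpa [tauComp, tauWord] using this
  | succ k ih =>
    have h1 : j + (k+1) + 1 = (j + k + 1) + 1 := by omega
    rw [h1, tauComp_last T s d 0 (j+k+1) b]
    have h2 : ∀ c, tauComp T s d 0 (j+k+1) c
        = (tauComp T s d (j+1) k c).flatMap (tauComp T s d 0 j) := fun c => ih c
    have h3 : 0 + (j + k + 1) + 1 = j + 1 + k + 1 := by omega
    rw [List.flatMap_congr (fun c _ => h2 c), ← List.flatMap_assoc, h3,
      ← tauComp_last T s d (j+1) k b]

end Lemmas2
section Lemmas3

variable {X : Type*} [TopologicalSpace X] {Γ : Type*} [Group Γ]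
variable (T : Γ →* (X ≃ₜ X)) (s : ℕ → Γ) (d : ℕ → ℕ)

lemma tlen_pos (hd : ∀ n, 1 ≤ d n) (i k : ℕ) : 0 < tlen d i k :=
  Finset.prod_pos fun t _ => hd (i+t)

lemma tlen_le (hd : ∀ n, 1 ≤ d n) (i k r : ℕ) : tlen d i k ≤ tlen d i (k+r) := by
  induction r with
  | zero => exact le_refl _
  | succ r ih =>
    refine ih.trans ?_
    rw [show k + (r+1) = (k+r)+1 by omega]
    show tlen d i (k+r) ≤ ∏ t ∈ Finset.range (k+r+1+1), d (i+t)
    rw [Finset.prod_range_succ]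
    exact Nat.le_mul_of_pos_right _ (hd _)

lemma letter_exists (hd : ∀ n, 1 ≤ d n) (i k : ℕ) : ∀ p, p < tlen d i k →
    ∃ γ : Γ, ∀ b : X, (tauComp T s d i k b)[p]? = some (T γ b) := by
  induction k generalizing i with
  | zero =>
    intro p hp
    have hp' : p < d i := by simpa [tlen] using hp
    exact ⟨s p, fun b => tauWord_getElem? T s d i b p hp'⟩
  | succ k ih =>
    intro p hp
    rw [tlen_succ] at hp
    have hdi : 0 < d i := hd i
    have hq : p / d i < tlen d (i+1) k := Nat.div_lt_of_lt_mul (by omega)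
    obtain ⟨γ', hγ'⟩ := ih (i+1) (p / d i) hq
    refine ⟨s (p % d i) * γ', fun b => ?_⟩
    show ((tauComp T s d (i+1) k b).flatMap (tauWord T s d i))[p]? = _
    rw [flatMap_getElem? _ _ (d i) hdi (fun c => tauWord_length T s d i c), hγ' b,
      Option.bind_some, tauWord_getElem? T s d i _ _ (Nat.mod_lt _ hdi), T_mul_apply]

lemma tauComp_prefix (hs1 : s 0 = 1) (hd : ∀ n, 1 ≤ d n) (i k r : ℕ) (b : X) (p : ℕ)
    (hp : p < tlen d i k) :
    (tauComp T s d i (k+r) b)[p]? = (tauComp T s d i k b)[p]? := by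
  induction r with
  | zero => rfl
  | succ r ih =>
    rw [show k + (r+1) = (k+r)+1 by omega, tauComp_last,
      flatMap_getElem? _ _ (tlen d i (k+r)) (tlen_pos d hd i (k+r))
        (fun c => tauComp_length T s d i (k+r) c)]
    have hlt : p < tlen d i (k+r) := lt_of_lt_of_le hp (tlen_le d hd i k r)
    rw [Nat.div_eq_of_lt hlt, Nat.mod_eq_of_lt hlt,
      tauWord_getElem? T s d _ b 0 (hd _), hs1, map_one]
    show (tauComp T s d i (k+r) b)[p]? = _
    exact ih

end Lemmas3
section Lemmas4

variable {X : Type*} [TopologicalSpace X] {Γ : Type*} [Group Γ]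
variable (T : Γ →* (X ≃ₜ X)) (s : ℕ → Γ) (d : ℕ → ℕ)

lemma int_div_mod_mul (m A B : ℤ) (hA : 0 < A) (hB : 0 < B) :
    m / A / B = m / (A * B) ∧ m % (A * B) = A * (m / A % B) + m % A := by
  have h1 : A * (m / A) + m % A = m := Int.mul_ediv_add_emod m A
  have h2 : B * (m / A / B) + (m / A) % B = m / A := Int.mul_ediv_add_emod (m/A) B
  have hrA1 : 0 ≤ m % A := Int.emod_nonneg m hA.ne'
  have hrA2 : m % A < A := Int.emod_lt_of_pos m hA
  have hrB1 : 0 ≤ m / A % B := Int.emod_nonneg _ hB.ne'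
  have hrB2 : m / A % B < B := Int.emod_lt_of_pos _ hB
  have hAB : 0 < A * B := mul_pos hA hB
  have key : (A * (m / A % B) + m % A) + (A * B) * (m / A / B) = m := by
    linear_combination h1 + A * h2
  have hR1 : 0 ≤ A * (m / A % B) + m % A := by positivity
  have hR2 : A * (m / A % B) + m % A < A * B := by nlinarith
  have := (Int.ediv_emod_unique hAB).mpr ⟨key, hR1, hR2⟩
  exact ⟨this.1.symm, this.2⟩

lemma tlen_zero_succ (n : ℕ) : tlen d 0 (n+1) = tlen d 0 n * d (n+1) := by
  simp [tlen, Finset.prod_range_succ]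

lemma tauSeqComp_getElem (hd : ∀ n, 1 ≤ d n) :
    ∀ (n : ℕ) (x : ℤ → X) (m : ℤ),
    (tauComp T s d 0 n (x (m / (tlen d 0 n : ℤ))))[(m % (tlen d 0 n : ℤ)).toNat]?
      = some (tauSeqComp T s d n x m) := by
  intro n
  induction n with
  | zero =>
    intro x m
    have h0 : tlen d 0 0 = d 0 := by simp [tlen]
    rw [h0]
    show (tauWord T s d 0 _)[_]? = some (tauSeq T s d 0 x m)
    have hd0 : (0:ℤ) < (d 0 : ℤ) := by exact_mod_cast hd 0
    have h1 : 0 ≤ m % (d 0 : ℤ) := Int.emod_nonneg m hd0.ne'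
    have h2 : m % (d 0 : ℤ) < (d 0 : ℤ) := Int.emod_lt_of_pos m hd0
    rw [tauWord_getElem? T s d 0 _ _ (by omega)]
    rfl
  | succ n ih =>
    intro x m
    have hA : (0:ℤ) < (tlen d 0 n : ℤ) := by exact_mod_cast tlen_pos d hd 0 n
    have hB : (0:ℤ) < (d (n+1) : ℤ) := by exact_mod_cast hd (n+1)
    obtain ⟨hdiv, hmod⟩ := int_div_mod_mul m (tlen d 0 n) (d (n+1)) hA hB
    have hcast : ((tlen d 0 (n+1) : ℕ) : ℤ) = (tlen d 0 n : ℤ) * (d (n+1) : ℤ) := by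
      rw [tlen_zero_succ]; push_cast; ring
    rw [hcast, ← hdiv]
    set q : ℕ := ((m / (tlen d 0 n : ℤ)) % (d (n+1) : ℤ)).toNat with hq
    set r : ℕ := (m % (tlen d 0 n : ℤ)).toNat with hr
    have hq1 : 0 ≤ (m / (tlen d 0 n : ℤ)) % (d (n+1) : ℤ) := Int.emod_nonneg _ hB.ne'
    have hq2 : (m / (tlen d 0 n : ℤ)) % (d (n+1) : ℤ) < (d (n+1) : ℤ) := Int.emod_lt_of_pos _ hB
    have hr1 : 0 ≤ m % (tlen d 0 n : ℤ) := Int.emod_nonneg _ hA.ne'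
    have hr2 : m % (tlen d 0 n : ℤ) < (tlen d 0 n : ℤ) := Int.emod_lt_of_pos _ hA
    have hmodge : 0 ≤ m % ((tlen d 0 n : ℤ) * (d (n+1) : ℤ)) :=
      Int.emod_nonneg _ (mul_pos hA hB).ne'
    have hZ : m % ((tlen d 0 n : ℤ) * (d (n+1) : ℤ)) = ((tlen d 0 n * q + r : ℕ) : ℤ) := by
      push_cast
      rw [hq, hr, Int.toNat_of_nonneg hq1, Int.toNat_of_nonneg hr1]
      exact hmod
    have hPnat : (m % ((tlen d 0 n : ℤ) * (d (n+1) : ℤ))).toNat = tlen d 0 n * q + r := by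
      rw [hZ, Int.toNat_natCast]
    rw [hPnat]
    have hK : 0 < tlen d 0 n := tlen_pos d hd 0 n
    rw [tauComp_last, flatMap_getElem? _ _ (tlen d 0 n) hK (fun c => tauComp_length T s d 0 n c)]
    have hdivq : (tlen d 0 n * q + r) / tlen d 0 n = q := by
      rw [Nat.mul_add_div hK, Nat.div_eq_of_lt (by omega), Nat.add_zero]
    have hmodr : (tlen d 0 n * q + r) % tlen d 0 n = r := by
      rw [Nat.mul_add_mod, Nat.mod_eq_of_lt (by omega)]
    rw [hdivq, hmodr]
    have hqlt : q < d (n+1) := by omega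
    rw [show (0:ℕ)+n+1 = n+1 by omega, tauWord_getElem? T s d (n+1) _ q hqlt, Option.bind_some]
    show (tauComp T s d 0 n (tauSeq T s d (n+1) x (m / (tlen d 0 n : ℤ))))[r]? = _
    exact ih (tauSeq T s d (n+1) x) m

end Lemmas4
section Lemmas5

open Filter

variable {X : Type*} [TopologicalSpace X] {Γ : Type*} [Group Γ]
variable (T : Γ →* (X ≃ₜ X)) (s : ℕ → Γ) (d : ℕ → ℕ)

lemma tlen_ge (d : ℕ → ℕ) (hd2 : ∀ t, 2 ≤ d t) (n : ℕ) : n + 1 ≤ tlen d 0 n := by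
  induction n with
  | zero => simpa [tlen] using (hd2 0).trans' (by omega)
  | succ n ih =>
    rw [tlen_zero_succ]
    calc n + 2 ≤ (n+1) * 2 := by omega
    _ ≤ tlen d 0 n * d (n+1) := Nat.mul_le_mul ih (hd2 _)

/-- The letter of `τ_0⋯τ_{n+1}(a)` at position `m + D_n` is the letter of
`τ_0⋯τ_n(x)` at position `m`, for `-D_n ≤ m < D_n`. -/
lemma seq_window (hs1 : s 0 = 1) (hd : ∀ n, 1 ≤ d n) (hd2 : ∀ t, 2 ≤ d t)
    (a : X) (x : ℤ → X) (hx1 : x (-1) = T (s 0) a) (hx0 : x 0 = T (s 1) a)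
    (n : ℕ) (m : ℤ) (h1 : -(tlen d 0 n : ℤ) ≤ m) (h2 : m < (tlen d 0 n : ℤ)) :
    (tauComp T s d 0 (n+1) a)[(m + (tlen d 0 n : ℤ)).toNat]?
      = some (tauSeqComp T s d n x m) := by
  have hK : 0 < tlen d 0 n := tlen_pos d hd 0 n
  have hKz : (0:ℤ) < (tlen d 0 n : ℤ) := by exact_mod_cast hK
  rw [tauComp_last, show (0:ℕ)+n+1 = n+1 by omega,
    flatMap_getElem? _ _ (tlen d 0 n) hK (fun c => tauComp_length T s d 0 n c)]
  rcases lt_or_ge m 0 with hm | hm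
  · -- negative part: block 0, image of a
    have hidx : (m + (tlen d 0 n : ℤ)).toNat < tlen d 0 n := by omega
    rw [Nat.div_eq_of_lt hidx, Nat.mod_eq_of_lt hidx,
      tauWord_getElem? T s d (n+1) a 0 (hd _), hs1, map_one, Option.bind_some]
    have hdiv : m / (tlen d 0 n : ℤ) = -1 ∧ m % (tlen d 0 n : ℤ) = m + (tlen d 0 n : ℤ) :=
      (Int.ediv_emod_unique hKz).mpr ⟨by ring, by omega, by omega⟩
    have := tauSeqComp_getElem T s d hd n x m
    rw [hdiv.1, hdiv.2, hx1, hs1, map_one] at this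
    simpa using this
  · -- nonnegative part: block 1, image of T (s 1) a
    have hidx : (m + (tlen d 0 n : ℤ)).toNat = tlen d 0 n + m.toNat := by omega
    have hmlt : m.toNat < tlen d 0 n := by omega
    rw [hidx]
    have hdiv : (tlen d 0 n + m.toNat) / tlen d 0 n = 1 := by
      rw [Nat.add_div_left _ hK, Nat.div_eq_of_lt hmlt]
    have hmod : (tlen d 0 n + m.toNat) % tlen d 0 n = m.toNat := by
      rw [Nat.add_mod_left, Nat.mod_eq_of_lt hmlt]
    rw [hdiv, hmod, tauWord_getElem? T s d (n+1) a 1 (by have := hd2 (n+1); omega),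
      Option.bind_some]
    have hdiv2 : m / (tlen d 0 n : ℤ) = 0 := Int.ediv_eq_zero_of_lt hm h2
    have hmod2 : m % (tlen d 0 n : ℤ) = m := Int.emod_eq_of_lt hm h2
    have := tauSeqComp_getElem T s d hd n x m
    rw [hdiv2, hmod2, hx0] at this
    exact this

/-- Exact values of `z` at nonnegative coordinates. -/
lemma z_exact [T2Space X] (hd : ∀ n, 1 ≤ d n) (hs1 : s 0 = 1)
    (a : X) (x : ℤ → X) (hx0 : x 0 = T (s 1) a) (z : ℤ → X)
    (hz : MapClusterPt z Filter.atTop fun n => tauSeqComp T s d n x)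
    (N : ℕ) (p : ℕ) (hp : p < tlen d 0 N) (v : X)
    (hv : (tauComp T s d 0 N (T (s 1) a))[p]? = some v) :
    z (p : ℤ) = v := by
  have hcl : MapClusterPt (z (p:ℤ)) atTop ((fun w : ℤ → X => w (p:ℤ)) ∘ fun n => tauSeqComp T s d n x) :=
    MapClusterPt.continuousAt_comp (Continuous.continuousAt (continuous_apply (p:ℤ))) hz
  have hev : ∀ n, N ≤ n → tauSeqComp T s d n x (p:ℤ) = v := by
    intro n hn
    obtain ⟨r, rfl⟩ : ∃ r, n = N + r := ⟨n - N, by omega⟩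
    have hplt : p < tlen d 0 (N + r) := lt_of_lt_of_le hp (tlen_le d hd 0 N r)
    have hKz : (0:ℤ) < (tlen d 0 (N+r) : ℤ) := by exact_mod_cast tlen_pos d hd 0 (N+r)
    have hdiv : (p : ℤ) / (tlen d 0 (N+r) : ℤ) = 0 :=
      Int.ediv_eq_zero_of_lt (by positivity) (by exact_mod_cast hplt)
    have hmod : (p : ℤ) % (tlen d 0 (N+r) : ℤ) = p :=
      Int.emod_eq_of_lt (by positivity) (by exact_mod_cast hplt)
    have h := tauSeqComp_getElem T s d hd (N+r) x (p:ℤ)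
    rw [hdiv, hmod, hx0, Int.toNat_natCast,
      tauComp_prefix T s d hs1 hd 0 N r _ p hp, hv] at h
    simpa using h.symm
  have hmap : Filter.map ((fun w : ℤ → X => w (p:ℤ)) ∘ fun n => tauSeqComp T s d n x) atTop
      ≤ Filter.principal {v} := by
    rw [Filter.le_principal_iff, Filter.mem_map]
    filter_upwards [Filter.eventually_ge_atTop N] with n hn
    simp [hev n hn]
  have : ClusterPt (z (p:ℤ)) (Filter.principal {v}) := ClusterPt.mono hcl hmap
  have hmem : z (p:ℤ) ∈ closure ({v} : Set X) := mem_closure_iff_clusterPt.mpr this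
  rwa [closure_singleton, Set.mem_singleton_iff] at hmem

end Lemmas5
section Lemmas6

open Filter

variable {X : Type*} [TopologicalSpace X] {Γ : Type*} [Group Γ]
variable (T : Γ →* (X ≃ₜ X)) (s : ℕ → Γ) (d : ℕ → ℕ)

lemma prod_range_succ' {M : Type*} [Monoid M] (f : ℕ → M) (k : ℕ) :
    ((List.range (k+1)).map f).prod = ((List.range k).map f).prod * f k := by
  rw [List.range_succ, List.map_append, List.prod_append]; simp

lemma prod_range_head {M : Type*} [Monoid M] (f : ℕ → M) (k : ℕ) :
    ((List.range (k+1)).map f).prod = f 0 * ((List.range k).map (fun t => f (t+1))).prod := by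
  rw [List.range_succ_eq_map, List.map_cons, List.prod_cons, List.map_map]
  rfl

lemma prod_ones {G : Type*} [Group G] (f : ℕ → G) (k : ℕ) (h : ∀ t < k, f t = 1) :
    ((List.range k).map f).prod = 1 :=
  List.prod_eq_one (by
    intro g hg
    obtain ⟨t, ht, rfl⟩ := List.mem_map.mp hg
    exact h t (List.mem_range.mp ht))

lemma prod_inv_stair {G : Type*} [Group G] (s : ℕ → G) (k : ℕ) (i j : ℕ → ℕ)
    (hij : ∀ t, t ≤ k → s (j t) = (s (i t))⁻¹) :
    ((List.range (k+1)).map (fun t => s (j (k - t)))).prod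
      = (((List.range (k+1)).map (fun t => s (i t))).prod)⁻¹ := by
  induction k with
  | zero => simp [hij 0 le_rfl, List.range_succ]
  | succ k ih =>
    have h1 : ((List.range (k+1)).map (fun t => s (j (k + 1 - (t+1))))).prod
        = ((List.range (k+1)).map (fun t => s (j (k - t)))).prod := by
      congr 1
      refine List.map_congr_left fun t _ => ?_
      have : k + 1 - (t+1) = k - t := by omega
      rw [this]
    rw [prod_range_head, h1, ih (fun t ht => hij t (by omega)),
      prod_range_succ' (fun t => s (i t)) (k+1), mul_inv_rev, Nat.sub_zero,
      hij (k+1) le_rfl]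

lemma generation (hs1 : s 0 = 1) (hdmono : Monotone d) (hd : ∀ n, 1 ≤ d n)
    (hsym : ∀ n, ∀ i < d n, ∃ j < d n, s j = (s i)⁻¹)
    (hgen : Subgroup.closure {g : Γ | ∃ n, ∃ i < d n, s i = g} = ⊤) (γ : Γ) :
    ∀ m : ℕ, ∃ (k : ℕ) (i : ℕ → ℕ), (∀ t, t ≤ k → i t < d (m + t)) ∧
      ((List.range (k+1)).map (fun t => s (i t))).prod = γ := by
  have hγ : γ ∈ Subgroup.closure {g : Γ | ∃ n, ∃ i < d n, s i = g} := by
    rw [hgen]; trivial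
  induction hγ using Subgroup.closure_induction with
  | mem g hg =>
    obtain ⟨n₀, i₀, hi₀, rfl⟩ := hg
    intro m
    refine ⟨n₀, fun t => if t = n₀ then i₀ else 0, fun t ht => ?_, ?_⟩
    · by_cases h : t = n₀
      · simpa [h] using lt_of_lt_of_le hi₀ (hdmono (by omega))
      · simpa [h] using Nat.lt_of_lt_of_le Nat.one_pos (hd (m+t))
    · rw [prod_range_succ']
      beta_reduce
      rw [if_pos rfl,
        prod_ones _ n₀ (fun t ht => by rw [if_neg (by omega), hs1]), one_mul]
  | one =>
    intro m
    exact ⟨0, fun _ => 0, fun t ht => hd _, by simp [List.range_succ, hs1]⟩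
  | mul γ₁ γ₂ hγ₁ hγ₂ ih₁ ih₂ =>
    intro m
    obtain ⟨k₁, i₁, hb₁, hp₁⟩ := ih₁ m
    obtain ⟨k₂, i₂, hb₂, hp₂⟩ := ih₂ (m + k₁ + 1)
    refine ⟨k₁ + 1 + k₂, fun t => if t ≤ k₁ then i₁ t else i₂ (t - (k₁+1)),
      fun t ht => ?_, ?_⟩
    · show (if t ≤ k₁ then i₁ t else i₂ (t - (k₁+1))) < d (m + t)
      by_cases h : t ≤ k₁
      · simpa [h] using hb₁ t h
      · rw [if_neg h]
        exact lt_of_lt_of_le (hb₂ (t - (k₁+1)) (by omega)) (hdmono (by omega))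
    · have hsplit : k₁ + 1 + k₂ + 1 = (k₁ + 1) + (k₂ + 1) := by omega
      rw [hsplit, List.range_add, List.map_append, List.prod_append, List.map_map]
      have e1 : (List.range (k₁+1)).map (fun t => s (if t ≤ k₁ then i₁ t else i₂ (t - (k₁+1))))
          = (List.range (k₁+1)).map (fun t => s (i₁ t)) := by
        refine List.map_congr_left fun t ht => ?_
        rw [if_pos (by have := List.mem_range.mp ht; omega)]
      have e2 : (List.range (k₂+1)).map
            ((fun t => s (if t ≤ k₁ then i₁ t else i₂ (t - (k₁+1)))) ∘ (fun x => k₁ + 1 + x))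
          = (List.range (k₂+1)).map (fun t => s (i₂ t)) := by
        refine List.map_congr_left fun t ht => ?_
        show s (if k₁ + 1 + t ≤ k₁ then i₁ (k₁+1+t) else i₂ (k₁ + 1 + t - (k₁+1))) = s (i₂ t)
        rw [if_neg (by omega)]
        have : k₁ + 1 + t - (k₁+1) = t := by omega
        rw [this]
      rw [e1, e2, hp₁, hp₂]
  | inv γ' hγ' ih =>
    intro m
    obtain ⟨k, i, hb, hp⟩ := ih m
    have hex : ∀ t, ∃ j', (t ≤ k → (j' < d (m+t) ∧ s j' = (s (i t))⁻¹)) := by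
      intro t
      by_cases ht : t ≤ k
      · obtain ⟨j', h1, h2⟩ := hsym (m+t) (i t) (hb t ht)
        exact ⟨j', fun _ => ⟨h1, h2⟩⟩
      · exact ⟨0, fun h => absurd h ht⟩
    choose jf hjf using hex
    refine ⟨2*k + 1, fun t => if t ≤ k then 0 else jf (2*k + 1 - t),
      fun t ht => ?_, ?_⟩
    · show (if t ≤ k then 0 else jf (2*k + 1 - t)) < d (m + t)
      by_cases h : t ≤ k
      · simpa [h] using Nat.lt_of_lt_of_le Nat.one_pos (hd (m+t))
      · rw [if_neg h]
        have h2 : 2*k + 1 - t ≤ k := by omega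
        exact lt_of_lt_of_le (hjf _ h2).1 (hdmono (by omega))
    · have hsplit : 2*k + 1 + 1 = (k + 1) + (k + 1) := by omega
      rw [hsplit, List.range_add, List.map_append, List.prod_append, List.map_map]
      have e1 : ((List.range (k+1)).map
          (fun t => s (if t ≤ k then 0 else jf (2*k + 1 - t)))).prod = 1 := by
        refine prod_ones _ _ fun t ht => ?_
        rw [if_pos (by omega), hs1]
      have e2 : (List.range (k+1)).map
            ((fun t => s (if t ≤ k then 0 else jf (2*k + 1 - t))) ∘ (fun x => k + 1 + x))
          = (List.range (k+1)).map (fun t => s (jf (k - t))) := by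
        refine List.map_congr_left fun t ht => ?_
        show s (if k + 1 + t ≤ k then 0 else jf (2*k + 1 - (k + 1 + t))) = s (jf (k - t))
        rw [if_neg (by omega)]
        have : 2*k + 1 - (k + 1 + t) = k - t := by omega
        rw [this]
      rw [e1, e2, one_mul, prod_inv_stair s k i jf (fun t ht => (hjf t ht).2), hp]

end Lemmas6
section Lemmas7

open Filter

variable {X : Type*} [TopologicalSpace X] {Γ : Type*} [Group Γ]
variable (T : Γ →* (X ≃ₜ X)) (s : ℕ → Γ) (d : ℕ → ℕ)

lemma stair_pos (hd : ∀ n, 1 ≤ d n) :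
    ∀ (k m : ℕ) (i : ℕ → ℕ), (∀ t, t ≤ k → i t < d (m + t)) →
    ∃ q, q < tlen d m k ∧ ∀ b : X, (tauComp T s d m k b)[q]?
      = some (T (((List.range (k+1)).map (fun t => s (i t))).prod) b) := by
  intro k
  induction k with
  | zero =>
    intro m i hi
    refine ⟨i 0, by simpa [tlen] using hi 0 le_rfl, fun b => ?_⟩
    show (tauWord T s d m b)[i 0]? = _
    rw [tauWord_getElem? T s d m b (i 0) (by simpa using hi 0 le_rfl)]
    simp [List.range_succ]
  | succ k ih =>
    intro m i hi
    obtain ⟨q', hq', hocc⟩ := ih (m+1) (fun t => i (t+1))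
      (fun t ht => by have := hi (t+1) (by omega); convert this using 2; omega)
    have hdm : 0 < d m := hd m
    refine ⟨q' * d m + i 0, ?_, fun b => ?_⟩
    · rw [tlen_succ]
      have h0 : i 0 < d m := by simpa using hi 0 (by omega)
      calc q' * d m + i 0 < (q' + 1) * d m := by ring_nf; omega
      _ ≤ tlen d (m+1) k * d m := Nat.mul_le_mul_right _ (by omega)
      _ = d m * tlen d (m+1) k := mul_comm _ _
    · show ((tauComp T s d (m+1) k b).flatMap (tauWord T s d m))[q' * d m + i 0]? = _
      rw [flatMap_getElem? _ _ (d m) hdm (fun c => tauWord_length T s d m c)]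
      have h0 : i 0 < d m := by simpa using hi 0 (by omega)
      have hdiv : (q' * d m + i 0) / d m = q' := by
        rw [mul_comm, Nat.mul_add_div hdm, Nat.div_eq_of_lt h0, Nat.add_zero]
      have hmod : (q' * d m + i 0) % d m = i 0 := by
        rw [mul_comm, Nat.mul_add_mod, Nat.mod_eq_of_lt h0]
      have hsplit : ((List.range (k+1+1)).map (fun t => s (i t))).prod
          = s (i 0) * ((List.range (k+1)).map (fun t => s (i (t+1)))).prod :=
        prod_range_head (fun t => s (i t)) (k+1)
      rw [hdiv, hmod, hocc b, Option.bind_some, tauWord_getElem? T s d m _ (i 0) h0,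
        ← T_mul_apply, ← hsplit]

lemma occurrence (hs1 : s 0 = 1) (hd : ∀ n, 1 ≤ d n) (hdmono : Monotone d)
    (hsym : ∀ n, ∀ i < d n, ∃ j < d n, s j = (s i)⁻¹)
    (hgen : Subgroup.closure {g : Γ | ∃ n, ∃ i < d n, s i = g} = ⊤)
    (γ : Γ) (m : ℕ) :
    ∃ k q, q < tlen d m k ∧ ∀ b : X, (tauComp T s d m k b)[q]? = some (T γ b) := by
  obtain ⟨k, i, hb, hp⟩ := generation s d hs1 hdmono hd hsym hgen γ m
  obtain ⟨q, hq, hocc⟩ := stair_pos T s d hd k m i hb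
  exact ⟨k, q, hq, fun b => by rw [hocc b, hp]⟩

lemma tlen_split (j k : ℕ) : tlen d 0 (j+k+1) = tlen d 0 j * tlen d (j+1) k := by
  have : j + k + 1 + 1 = (j+1) + (k+1) := by omega
  rw [tlen, this, Finset.prod_range_add]
  congr 1
  refine Finset.prod_congr rfl fun t _ => ?_
  congr 1
  omega

/-- Exact occurrence of `τ_0⋯τ_j(T^γ a)` inside `z` at nonnegative positions. -/
lemma z_occurrence [T2Space X] (hs1 : s 0 = 1) (hd : ∀ n, 1 ≤ d n) (hdmono : Monotone d)
    (hsym : ∀ n, ∀ i < d n, ∃ j < d n, s j = (s i)⁻¹)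
    (hgen : Subgroup.closure {g : Γ | ∃ n, ∃ i < d n, s i = g} = ⊤)
    (a : X) (x : ℤ → X) (hx0 : x 0 = T (s 1) a) (z : ℤ → X)
    (hz : MapClusterPt z Filter.atTop fun n => tauSeqComp T s d n x)
    (γ : Γ) (j : ℕ) :
    ∃ p : ℕ, ∀ r : ℕ, r < tlen d 0 j → ∀ w : X,
      (tauComp T s d 0 j (T γ a))[r]? = some w → z ((p : ℤ) + (r : ℤ)) = w := by
  obtain ⟨k, q, hq, hocc⟩ := occurrence T s d hs1 hd hdmono hsym hgen (γ * (s 1)⁻¹) (j+1)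
  have hK : 0 < tlen d 0 j := tlen_pos d hd 0 j
  refine ⟨q * tlen d 0 j, fun r hr w hw => ?_⟩
  have hlt : q * tlen d 0 j + r < tlen d 0 (j+k+1) := by
    rw [tlen_split d j k, mul_comm (tlen d 0 j)]
    calc q * tlen d 0 j + r < (q + 1) * tlen d 0 j := by ring_nf; omega
    _ ≤ tlen d (j+1) k * tlen d 0 j := Nat.mul_le_mul_right _ (by omega)
  have hval : (tauComp T s d 0 (j+k+1) (T (s 1) a))[q * tlen d 0 j + r]? = some w := by
    rw [tauComp_split T s d j k, flatMap_getElem? _ _ (tlen d 0 j) hK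
      (fun c => tauComp_length T s d 0 j c)]
    have hdiv : (q * tlen d 0 j + r) / tlen d 0 j = q := by
      rw [mul_comm, Nat.mul_add_div hK, Nat.div_eq_of_lt hr, Nat.add_zero]
    have hmod : (q * tlen d 0 j + r) % tlen d 0 j = r := by
      rw [mul_comm, Nat.mul_add_mod, Nat.mod_eq_of_lt hr]
    rw [hdiv, hmod, hocc (T (s 1) a), Option.bind_some, ← T_mul_apply,
      inv_mul_cancel_right]
    try exact hw
  have := z_exact T s d hd hs1 a x hx0 z hz (j+k+1) (q * tlen d 0 j + r) hlt w hval
  rw [show ((q * tlen d 0 j : ℕ) : ℤ) + (r : ℤ) = ((q * tlen d 0 j + r : ℕ) : ℤ) by push_cast; ring]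
  exact this

end Lemmas7
section Lemmas8

open Filter

variable {X : Type*} [TopologicalSpace X] {Γ : Type*} [Group Γ]
variable (T : Γ →* (X ≃ₜ X)) (s : ℕ → Γ) (d : ℕ → ℕ)

/-- Every window of every shift of `z` lies in `lang a`. -/
lemma z_window_mem_lang (hs1 : s 0 = 1) (hd : ∀ n, 1 ≤ d n) (hd2 : ∀ t, 2 ≤ d t)
    (a : X) (x : ℤ → X) (hx1 : x (-1) = T (s 0) a) (hx0 : x 0 = T (s 1) a) (z : ℤ → X)
    (hz : MapClusterPt z Filter.atTop fun n => tauSeqComp T s d n x)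
    (k : ℤ) (n : ℕ) :
    (fun m : Fin (2*n+1) => z ((m.val : ℤ) - (n:ℤ) + k)) ∈ lang T s d a (2*n+1) := by
  set ℓ := 2*n+1 with hℓ
  set W : (ℤ → X) → (Fin ℓ → X) := fun w => fun m => w ((m.val:ℤ) - (n:ℤ) + k) with hW
  have hWc : Continuous W := continuous_pi fun m => continuous_apply _
  have hcl : MapClusterPt (W z) atTop (W ∘ fun n' => tauSeqComp T s d n' x) :=
    MapClusterPt.continuousAt_comp hWc.continuousAt hz
  have hev : ∀ᶠ n' in atTop, (W ∘ fun n' => tauSeqComp T s d n' x) n'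
      ∈ subwordSet T s d a ℓ := by
    filter_upwards [eventually_ge_atTop (k.natAbs + n + 1)] with n' hn'
    have htl : k.natAbs + n + 1 < tlen d 0 n' := by
      have := tlen_ge d hd2 n'
      omega
    refine ⟨n' + 1, ((k - (n:ℤ)) + (tlen d 0 n' : ℤ)).toNat, fun m => ?_⟩
    have hm : m.val < 2*n+1 := m.isLt
    have h1 : -(tlen d 0 n' : ℤ) ≤ (m.val : ℤ) - (n:ℤ) + k := by omega
    have h2 : (m.val : ℤ) - (n:ℤ) + k < (tlen d 0 n' : ℤ) := by omega
    have := seq_window T s d hs1 hd hd2 a x hx1 hx0 n' ((m.val : ℤ) - (n:ℤ) + k) h1 h2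
    rw [show (((m.val : ℤ) - (n:ℤ) + k) + (tlen d 0 n' : ℤ)).toNat
      = ((k - (n:ℤ)) + (tlen d 0 n' : ℤ)).toNat + m.val by omega] at this
    exact this
  have hmap : Filter.map (W ∘ fun n' => tauSeqComp T s d n' x) atTop
      ≤ Filter.principal (subwordSet T s d a ℓ) := by
    rwa [Filter.le_principal_iff, Filter.mem_map]
  exact mem_closure_iff_clusterPt.mpr (ClusterPt.mono hcl hmap)

end Lemmas8



/-- Fix `a ∈ X` and let `x ∈ X^ℤ` be any bi-infinite sequence with
`x_{-1} = T^{s_1}(a)` and `x_0 = T^{s_2}(a)` (0-indexed: `s 0` and `s 1`). Then for any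
accumulation point `z` of the sequence `(τ_0 ∘ τ_1 ∘ ⋯ ∘ τ_n(x))_n` in `X^ℤ`, the subshift
`X_τ̄` is the closure of the shift-orbit `{σ^k(z) : k ∈ ℤ}` of `z`. -/
theorem sadic_orbit_closure_of_accumulation_point
    {X : Type*} [TopologicalSpace X] [CompactSpace X] [MetrizableSpace X]
    [TotallyDisconnectedSpace X] [PerfectSpace X] [Nonempty X]
    {Γ : Type*} [Group Γ] [Countable Γ]
    (T : Γ →* (X ≃ₜ X))
    (hfree : ∀ (γ : Γ) (x : X), T γ x = x → γ = 1)
    (hmin : ∀ x : X, Dense (Set.range fun γ : Γ => T γ x))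
    (s : ℕ → Γ) (d : ℕ → ℕ)
    (hs1 : s 0 = 1) (hd : ∀ n, 1 ≤ d n) (hd2 : 2 ≤ d 0) (hdmono : Monotone d)
    (hsym : ∀ n, ∀ i < d n, ∃ j < d n, s j = (s i)⁻¹)
    (hgen : Subgroup.closure {g : Γ | ∃ n, ∃ i < d n, s i = g} = ⊤)
    (a : X) (x : ℤ → X) (hx1 : x (-1) = T (s 0) a) (hx0 : x 0 = T (s 1) a)
    (z : ℤ → X) (hz : MapClusterPt z Filter.atTop fun n => tauSeqComp T s d n x) :
    Xtau T s d = closure (Set.range fun k : ℤ => fun m : ℤ => z (m + k)) := by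
  have hd2' : ∀ t, 2 ≤ d t := fun t => hd2.trans (hdmono (Nat.zero_le t))
  set S : Set (ℤ → X) := Set.range fun k : ℤ => fun m : ℤ => z (m + k) with hS
  apply Set.eq_of_subset_of_subset
  · -- Xtau ⊆ closure S
    intro y hy
    rw [mem_closure_iff_nhds]
    intro t ht
    rw [nhds_pi] at ht
    obtain ⟨I, hIfin, V, hV, hVsub⟩ := Filter.mem_pi.mp ht
    obtain ⟨N, hN⟩ : ∃ N : ℕ, ∀ m ∈ I, m.natAbs ≤ N := by
      obtain ⟨b, hb⟩ := (hIfin.image Int.natAbs).bddAbove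
      exact ⟨b, fun m hm => hb (Set.mem_image_of_mem _ hm)⟩
    have hw := hy N
    obtain ⟨b, hwb⟩ := Set.mem_iUnion.mp hw
    classical
    set ℓ := 2*N+1 with hℓ
    set w : Fin ℓ → X := fun m : Fin ℓ => y ((m.val : ℤ) - (N:ℤ)) with hwdef
    -- open sets around the letters of the window
    set O : Fin ℓ → Set X := fun m =>
      if ((m.val:ℤ) - (N:ℤ)) ∈ I then interior (V ((m.val:ℤ) - (N:ℤ))) else Set.univ with hO
    have hOopen : ∀ m, IsOpen (O m) := by
      intro m
      show IsOpen (if ((m.val:ℤ) - (N:ℤ)) ∈ I then interior (V ((m.val:ℤ) - (N:ℤ))) else Set.univ)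
      split
      · exact isOpen_interior
      · exact isOpen_univ
    have hwO : ∀ m, w m ∈ O m := by
      intro m
      show w m ∈ (if ((m.val:ℤ) - (N:ℤ)) ∈ I then interior (V ((m.val:ℤ) - (N:ℤ))) else Set.univ)
      split
      · exact mem_interior_iff_mem_nhds.mpr (hV _)
      · trivial
    have hUopen : IsOpen (Set.univ.pi O) := isOpen_set_pi Set.finite_univ fun m _ => hOopen m
    have hwU : w ∈ Set.univ.pi O := fun m _ => hwO m
    have hwb' : w ∈ closure (subwordSet T s d b ℓ) := hwb
    obtain ⟨v, hvU, j, off, hj⟩ := _root_.mem_closure_iff.mp hwb' _ hUopen hwU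
    -- the letters of the occurring subword
    have hbound : ∀ m : Fin ℓ, off + m.val < tlen d 0 j := by
      intro m
      obtain ⟨h, -⟩ := List.getElem?_eq_some_iff.mp (hj m)
      rwa [tauComp_length] at h
    have hgex : ∀ m : Fin ℓ, ∃ γm : Γ, ∀ c : X,
        (tauComp T s d 0 j c)[off + m.val]? = some (T γm c) :=
      fun m => letter_exists T s d hd 0 j (off + m.val) (hbound m)
    choose g hg using hgex
    have hvg : ∀ m : Fin ℓ, v m = T (g m) b := by
      intro m
      have h1 := hj m
      rw [hg m b] at h1
      exact (Option.some_injective _ h1).symm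
    -- approximate b by a point of the orbit of a
    set Vb : Set X := ⋂ m : Fin ℓ, (T (g m)) ⁻¹' (O m) with hVb
    have hVbopen : IsOpen Vb :=
      isOpen_iInter_of_finite fun m => (hOopen m).preimage (T (g m)).continuous
    have hbVb : b ∈ Vb := Set.mem_iInter.mpr fun m => by
      show T (g m) b ∈ O m
      rw [← hvg m]
      exact hvU m (Set.mem_univ m)
    obtain ⟨-, ⟨γ₀, rfl⟩, hγ₀⟩ := (hmin a).exists_mem_open hVbopen ⟨b, hbVb⟩
    -- exact occurrence inside z
    obtain ⟨p, hp⟩ := z_occurrence T s d hs1 hd hdmono hsym hgen a x hx0 z hz γ₀ j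
    refine ⟨fun m : ℤ => z (m + ((p:ℤ) + off + N)), hVsub ?_, ⟨(p:ℤ) + off + N, rfl⟩⟩
    intro i hi
    have hiN : i.natAbs ≤ N := hN i hi
    set m' : Fin ℓ := ⟨(i + N).toNat, by omega⟩ with hm'
    have hr : off + m'.val < tlen d 0 j := hbound m'
    have hzval : z ((p:ℤ) + (off + m'.val : ℕ)) = T (g m') (T γ₀ a) :=
      hp (off + m'.val) hr _ (hg m' (T γ₀ a))
    have harg : i + ((p:ℤ) + off + N) = (p:ℤ) + ((off + m'.val : ℕ) : ℤ) := by
      have hval : (m'.val : ℤ) = i + N := by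
        show (((i + (N:ℤ)).toNat : ℕ) : ℤ) = i + N
        omega
      push_cast
      omega
    show z (i + ((p:ℤ) + off + N)) ∈ V i
    rw [harg, hzval]
    have hmem : T (g m') (T γ₀ a) ∈ O m' := by
      have := Set.mem_iInter.mp hγ₀ m'
      exact this
    have hOsub : O m' ⊆ V i := by
      have hieq : ((m'.val:ℤ) - (N:ℤ)) = i := by
        have hval : (m'.val : ℤ) = i + N := by
          show (((i + (N:ℤ)).toNat : ℕ) : ℤ) = i + N
          omega
        omega
      show (if ((m'.val:ℤ) - (N:ℤ)) ∈ I then interior (V ((m'.val:ℤ) - (N:ℤ))) else Set.univ) ⊆ V i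
      rw [hieq, if_pos hi]
      exact interior_subset
    exact hOsub hmem
  · -- closure S ⊆ Xtau
    intro y hy n
    set ℓ := 2*n+1 with hℓ
    set W : (ℤ → X) → (Fin ℓ → X) := fun w => fun m : Fin ℓ => w ((m.val:ℤ) - (n:ℤ)) with hWdef
    have hWc : Continuous W := continuous_pi fun m => continuous_apply _
    have h1 : W y ∈ closure (W '' S) :=
      image_closure_subset_closure_image hWc ⟨y, hy, rfl⟩
    have h2 : W '' S ⊆ lang T s d a ℓ := by
      rintro - ⟨-, ⟨k, rfl⟩, rfl⟩
      exact z_window_mem_lang T s d hs1 hd hd2' a x hx1 hx0 z hz k n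
    have h3 : W y ∈ lang T s d a ℓ :=
      closure_minimal h2 isClosed_closure h1
    exact Set.mem_iUnion.mpr ⟨a, h3⟩
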